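/- For every constant α > 0 there exists a constant c > 0 such that for all sufficiently large n and all integers k with 1 < k ≤ n/4, the GSEMO maximizing OJZJ_k, started from any population state in which the population consists entirely of Pareto-optimal individuals, has size at least α·n, and contains neither 0ⁿ nor 1ⁿ, takes in expectation at least c·n^{k+1} objective-function evaluations before the objective values of the population cover the Pareto front of OJZJ_k. -/

import Mathlib

open scoped ENNReal

namespace GSEMOPaper

attribute [local instance] Classical.propDecidable

/-- An individual (bit string) of length `n`. -/
abbrev Individual (n : ℕ) := Fin n → Bool

/-- `u` weakly dominates `v` (maximization, two objectives). -/
def weaklyDom (u v : ℝ × ℝ) : Prop := v.1 ≤ u.1 ∧ v.2 ≤ u.2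

/-- `u` strictly dominates `v`. -/
def strictlyDom (u v : ℝ × ℝ) : Prop := weaklyDom u v ∧ u ≠ v

/-- The Pareto front of a bi-objective function on bit strings. -/
def paretoFront {n : ℕ} (f : Individual n → ℝ × ℝ) : Set (ℝ × ℝ) :=
  {u | ∃ x : Individual n, f x = u ∧ ∀ y : Individual n, ¬ strictlyDom (f y) (f x)}

/-- The objective values of the population `P` cover the Pareto front of `f`. -/
def covers {n : ℕ} (f : Individual n → ℝ × ℝ) (P : Finset (Individual n)) : Prop :=
  paretoFront f ⊆ f '' (P : Set (Individual n))

/-- A valid (G)SEMO population: distinct members are mutually non-dominated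
(in particular they have pairwise distinct objective values). -/
def validPop {n : ℕ} (f : Individual n → ℝ × ℝ) (P : Finset (Individual n)) : Prop :=
  ∀ x ∈ P, ∀ y ∈ P, x ≠ y → ¬ weaklyDom (f x) (f y)

/-- Survival selection of the (G)SEMO: remove all individuals weakly dominated by the
offspring `y`, then insert `y` unless it is strictly dominated by a remaining individual. -/
noncomputable def updatePop {n : ℕ} (f : Individual n → ℝ × ℝ)
    (P : Finset (Individual n)) (y : Individual n) : Finset (Individual n) :=
  let Q := P.filter fun z => ¬ weaklyDom (f y) (f z)
  if ∃ z ∈ Q, strictlyDom (f z) (f y) then Q else insert y Q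

/-- Flip position `i` of `x`. -/
def flipOne {n : ℕ} (x : Individual n) (i : Fin n) : Individual n :=
  Function.update x i (!x i)

/-- One-bit mutation (SEMO): flip exactly one uniformly random position. -/
noncomputable def oneBitMut {n : ℕ} (x : Individual n) : PMF (Individual n) :=
  if h : n = 0 then PMF.pure x
  else
    haveI : Nonempty (Fin n) := ⟨⟨0, Nat.pos_of_ne_zero h⟩⟩
    (PMF.uniformOfFintype (Fin n)).map (flipOne x)

/-- A vector of `m` independent Bernoulli(`p`) bits. -/
noncomputable def bernoulliVec (p : ℝ≥0∞) (hp : p ≤ 1) : (m : ℕ) → PMF (Fin m → Bool)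
  | 0 => PMF.pure fun i => i.elim0
  | m + 1 => (PMF.bernoulli p.toNNReal (by simpa using ENNReal.toNNReal_mono ENNReal.one_ne_top hp)).bind fun b => (bernoulliVec p hp m).map fun v => Fin.cons b v

/-- Standard bit mutation (GSEMO): flip each position independently with probability `1/n`. -/
noncomputable def stdBitMut {n : ℕ} (x : Individual n) : PMF (Individual n) :=
  if h : n = 0 then PMF.pure x
  else
    (bernoulliVec ((n : ℝ≥0∞))⁻¹
        (ENNReal.inv_le_one.mpr (by exact_mod_cast Nat.one_le_iff_ne_zero.mpr h)) n).map
      fun mask => fun j => if mask j then !x j else x j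

/-- One iteration of the (G)SEMO maximizing `f`, with mutation operator `mutOp`:
choose a parent uniformly at random from the population, mutate it, and perform
survival selection. -/
noncomputable def semoStep {n : ℕ} (f : Individual n → ℝ × ℝ)
    (mutOp : Individual n → PMF (Individual n))
    (P : Finset (Individual n)) : PMF (Finset (Individual n)) :=
  if h : P.Nonempty then
    (PMF.uniformOfFinset P h).bind fun x => (mutOp x).map fun y => updatePop f P y
  else PMF.pure P

/-- One iteration of the modified (G)SEMO: choose `i ∈ {0, …, m}` uniformly at random;
if the population contains no individual `z` with `idx z = i`, nothing happens;
otherwise the (unique) such individual is the parent. -/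
noncomputable def modStep {n : ℕ} (f : Individual n → ℝ × ℝ)
    (mutOp : Individual n → PMF (Individual n))
    (idx : Individual n → ℕ) (m : ℕ)
    (P : Finset (Individual n)) : PMF (Finset (Individual n)) :=
  (PMF.uniformOfFintype (Fin (m + 1))).bind fun i =>
    let S := P.filter fun z => idx z = (i : ℕ)
    if h : S.Nonempty then
      (PMF.uniformOfFinset S h).bind fun x => (mutOp x).map fun y => updatePop f P y
    else PMF.pure P

/-- Distribution of the trajectory (list of states, most recent first) of `t` iterations of
the Markov chain with one-step kernel `step`, started in state `s`. The resulting lists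
have length `t + 1` and record the states `P⁽ᵗ⁾, …, P⁽⁰⁾`. -/
noncomputable def run {σ : Type*} [Inhabited σ] (step : σ → PMF σ) (s : σ) : ℕ → PMF (List σ)
  | 0 => PMF.pure [s]
  | t + 1 => (run step s t).bind fun l => (step l.headI).map fun s' => s' :: l

/-- The probability that a sample from `p` lies in the event `E`. -/
noncomputable def prob {α : Type*} (p : PMF α) (E : Set α) : ℝ≥0∞ := p.toOuterMeasure E

/-- The uniform distribution on `{0,1}ⁿ` used for initialization. -/
noncomputable def uniformInit (n : ℕ) : PMF (Individual n) :=
  PMF.uniformOfFintype (Individual n)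

/-- The number of ones of a bit string. -/
def ones {n : ℕ} (x : Individual n) : ℕ :=
  (Finset.univ.filter fun i : Fin n => x i = true).card

/-- The number of zeros of a bit string. -/
def zeros {n : ℕ} (x : Individual n) : ℕ :=
  (Finset.univ.filter fun i : Fin n => x i = false).card

/-- `g₁ x`: the number of ones in the first half (positions `0, …, n/2 - 1`). -/
def g1 {n : ℕ} (x : Individual n) : ℕ :=
  (Finset.univ.filter fun i : Fin n => (i : ℕ) < n / 2 ∧ x i = true).card

/-- `g₂ x`: the number of ones in the second half (positions `n/2, …, n - 1`). -/
def g2 {n : ℕ} (x : Individual n) : ℕ :=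
  (Finset.univ.filter fun i : Fin n => n / 2 ≤ (i : ℕ) ∧ x i = true).card

/-- The COCZ benchmark: `COCZ(x) = (g₁(x) + g₂(x), g₁(x) + n/2 − g₂(x))`. -/
noncomputable def cocz {n : ℕ} (x : Individual n) : ℝ × ℝ :=
  (((g1 x + g2 x : ℕ) : ℝ), (g1 x : ℝ) + (n : ℝ) / 2 - (g2 x : ℝ))

/-- The OneMinMax benchmark: `OMM(x) = (|x|₁, n − |x|₁)`. -/
noncomputable def omm {n : ℕ} (x : Individual n) : ℝ × ℝ :=
  ((ones x : ℝ), (n : ℝ) - (ones x : ℝ))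

/-- The OJZJ benchmark with gap parameter `k`. -/
noncomputable def ojzj (n k : ℕ) (x : Individual n) : ℝ × ℝ :=
  ((if ones x ≤ n - k ∨ x = fun _ => true then ((k + ones x : ℕ) : ℝ)
      else ((n - ones x : ℕ) : ℝ)),
   (if zeros x ≤ n - k ∨ x = fun _ => false then ((k + zeros x : ℕ) : ℝ)
      else ((n - zeros x : ℕ) : ℝ)))


/-!
The front point `(k, n + k)` is attained only by `0ⁿ`, while every individual of the inner
region `k ≤ |x|₁ ≤ n - k` has first objective `k + |x|₁ > k`. Starting from inner Pareto optima,
the population stays inner, keeps pairwise distinct numbers of ones and never shrinks as long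
as the offspring is neither `0ⁿ` nor `1ⁿ`: a gap offspring is strictly dominated by every inner
individual, and an inner offspring replaces at most the one member with its number of ones.
A parent `x` produces `0ⁿ` or `1ⁿ` with probability at most `n^(-|x|₁) + n^(-|x|₀)`; since the
numbers of ones are distinct and at least `k`, this sums over the population to at most
`4 n^(-k)`, so one iteration breaks the invariant with probability at most `4 / (m n^k)` for a
population of size `m ≥ αn`. By a union bound the front stays uncovered with probability at
least `1/2` during the first `(m / 8) n^k` iterations, and the tail-sum formula gives the bound.
-/

variable {n : ℕ}

lemma ones_add_zeros (x : Individual n) : ones x + zeros x = n := by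
  simpa [ones, zeros] using
    Finset.card_filter_add_card_filter_not (s := Finset.univ) (fun i : Fin n => x i = true)

lemma ones_eq_zero_iff {x : Individual n} : ones x = 0 ↔ x = fun _ => false := by
  simp [ones, Finset.filter_eq_empty_iff, funext_iff]

lemma zeros_eq_zero_iff {x : Individual n} : zeros x = 0 ↔ x = fun _ => true := by
  simp [zeros, Finset.filter_eq_empty_iff, funext_iff]

lemma hammingDist_allFalse (x : Individual n) : hammingDist x (fun _ => false) = ones x := by
  simp [hammingDist, ones]

lemma hammingDist_allTrue (x : Individual n) : hammingDist x (fun _ => true) = zeros x := by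
  simp [hammingDist, zeros]

lemma exists_ones_eq {t : ℕ} (ht : t ≤ n) : ∃ x : Individual n, ones x = t := by
  refine ⟨fun i => decide ((i : ℕ) < t), ?_⟩
  have : (Finset.univ.filter fun i : Fin n => (i : ℕ) < t) = (Finset.range t).attachFin
      (fun m hm => (Finset.mem_range.1 hm).trans_le ht) := by
    ext i; simp
  simp [ones, this]

def IsInner (n k : ℕ) (x : Individual n) : Prop := k ≤ ones x ∧ ones x ≤ n - k

variable {k : ℕ}

lemma ojzj_of_isInner {x : Individual n} (hx : IsInner n k x) :
    ojzj n k x = (((k + ones x : ℕ) : ℝ), ((k + (n - ones x) : ℕ) : ℝ)) := by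
  have := ones_add_zeros x
  have := hx.1
  rw [ojzj, if_pos (Or.inl hx.2), if_pos (Or.inl (by omega : zeros x ≤ n - k))]
  congr 3
  omega

lemma ojzj_of_lt {x : Individual n} (hkn : 2 * k ≤ n) (h0 : x ≠ fun _ => false)
    (hx : ones x < k) : ojzj n k x = (((k + ones x : ℕ) : ℝ), ((ones x : ℕ) : ℝ)) := by
  have := ones_add_zeros x
  rw [ojzj, if_pos (Or.inl (by omega)), if_neg (not_or.2 ⟨by omega, h0⟩),
    show n - zeros x = ones x by omega]

lemma ojzj_of_gt {x : Individual n} (hkn : 2 * k ≤ n) (h1 : x ≠ fun _ => true)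
    (hx : n - k < ones x) : ojzj n k x = (((zeros x : ℕ) : ℝ), ((k + zeros x : ℕ) : ℝ)) := by
  have := ones_add_zeros x
  rw [ojzj, if_neg (not_or.2 ⟨by omega, h1⟩), if_pos (Or.inl (by omega)),
    show n - ones x = zeros x by omega]

lemma ojzj_weaklyDom_iff {x y : Individual n} (hx : IsInner n k x) (hy : IsInner n k y) :
    weaklyDom (ojzj n k x) (ojzj n k y) ↔ ones x = ones y := by
  have := hx.2
  have := hy.2
  rw [ojzj_of_isInner hx, ojzj_of_isInner hy, weaklyDom]
  simp only [Nat.cast_le]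
  omega

lemma ojzj_not_strictlyDom {x y : Individual n} (hx : IsInner n k x) (hy : IsInner n k y) :
    ¬ strictlyDom (ojzj n k x) (ojzj n k y) := fun h => h.2 <| by
  rw [ojzj_of_isInner hx, ojzj_of_isInner hy, (ojzj_weaklyDom_iff hx hy).1 h.1]

lemma ojzj_strictlyDom_of_not_isInner (hkn : 2 * k ≤ n) {x z : Individual n}
    (hz : IsInner n k z) (hx : ¬ IsInner n k x)
    (h0 : x ≠ fun _ => false) (h1 : x ≠ fun _ => true) :
    strictlyDom (ojzj n k z) (ojzj n k x) := by
  have := ones_add_zeros x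
  rw [ojzj_of_isInner hz, strictlyDom, weaklyDom]
  have := hz.1
  have := hz.2
  rcases Nat.lt_or_ge (ones x) k with hlt | hge
  · rw [ojzj_of_lt hkn h0 hlt]
    simp only [ne_eq, Prod.mk.injEq, Nat.cast_le, Nat.cast_inj]
    omega
  · have hgt : n - k < ones x := by unfold IsInner at hx; omega
    rw [ojzj_of_gt hkn h1 hgt]
    simp only [ne_eq, Prod.mk.injEq, Nat.cast_le, Nat.cast_inj]
    omega

lemma ojzj_allFalse :
    ojzj n k (fun _ => false) = (((k : ℕ) : ℝ), ((k + n : ℕ) : ℝ)) := by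
  have h := ones_add_zeros (fun _ => false : Individual n)
  rw [ones_eq_zero_iff.2 rfl, zero_add] at h
  rw [ojzj, if_pos (Or.inr rfl), if_pos (Or.inl (by rw [ones_eq_zero_iff.2 rfl]; omega)),
    ones_eq_zero_iff.2 rfl, h, add_zero]

lemma ojzj_snd_le (x : Individual n) : (ojzj n k x).2 ≤ ((k + zeros x : ℕ) : ℝ) := by
  unfold ojzj
  dsimp only
  split_ifs with h
  · exact le_rfl
  · push Not at h
    exact Nat.cast_le.2 (by omega)

lemma ojzj_allFalse_mem_paretoFront :
    ojzj n k (fun _ => false) ∈ paretoFront (ojzj n k) := by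
  refine ⟨_, rfl, fun y ⟨⟨_, h2⟩, hne⟩ => hne ?_⟩
  have hy : (ojzj n k y).2 ≤ ((k + zeros y : ℕ) : ℝ) := ojzj_snd_le y
  rw [ojzj_allFalse] at h2
  have hzeros : n ≤ zeros y := by
    have := h2.trans hy
    simp only [Nat.cast_le] at this
    omega
  have := ones_add_zeros y
  rw [ones_eq_zero_iff.1 (show ones y = 0 by omega)]

lemma not_covers_of_forall_isInner (hk : 0 < k) {Q : Finset (Individual n)}
    (hQ : ∀ x ∈ Q, IsInner n k x) : ¬ covers (ojzj n k) Q := by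
  intro hcov
  obtain ⟨z, hzQ, hz⟩ := hcov ojzj_allFalse_mem_paretoFront
  have hz1 := congrArg Prod.fst hz
  rw [ojzj_of_isInner (hQ z hzQ), ojzj_allFalse] at hz1
  have := (hQ z hzQ).1
  simp only [Nat.cast_inj] at hz1
  omega

lemma isInner_of_mem_paretoFront (hkn : 2 * k ≤ n) {x : Individual n}
    (hx : ojzj n k x ∈ paretoFront (ojzj n k))
    (h0 : x ≠ fun _ => false) (h1 : x ≠ fun _ => true) : IsInner n k x := by
  by_contra hinner
  obtain ⟨w, hw⟩ := exists_ones_eq (n := n) (t := k) (by omega)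
  have hw : IsInner n k w := ⟨hw.ge, by omega⟩
  obtain ⟨x', hx', hopt⟩ := hx
  exact hopt w (hx' ▸ ojzj_strictlyDom_of_not_isInner hkn hw hinner h0 h1)

lemma updatePop_eq_self {f : Individual n → ℝ × ℝ} {Q : Finset (Individual n)}
    {y : Individual n} (hQ : Q.Nonempty) (hy : ∀ z ∈ Q, strictlyDom (f z) (f y)) :
    updatePop f Q y = Q := by
  have hfilter : Q.filter (fun z => ¬ weaklyDom (f y) (f z)) = Q := by
    refine Finset.filter_true_of_mem fun z hz hyz => (hy z hz).2 ?_
    obtain ⟨⟨h1, h2⟩, -⟩ := hy z hz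
    exact Prod.ext (le_antisymm hyz.1 h1) (le_antisymm hyz.2 h2)
  obtain ⟨z, hz⟩ := hQ
  rw [updatePop]
  simp only [hfilter]
  exact if_pos ⟨z, hz, hy z hz⟩

lemma updatePop_eq_insert {f : Individual n → ℝ × ℝ} {Q : Finset (Individual n)}
    {y : Individual n} (hy : ∀ z ∈ Q, ¬ strictlyDom (f z) (f y)) :
    updatePop f Q y = insert y (Q.filter fun z => ¬ weaklyDom (f y) (f z)) :=
  if_neg fun ⟨z, hz, hzy⟩ => hy z (Finset.mem_filter.1 hz).1 hzy

lemma card_le_card_filter_ne_add_one_of_injOn {ι β : Type*} [DecidableEq β] {g : ι → β}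
    {s : Finset ι} (hg : Set.InjOn g s) (b : β) :
    s.card ≤ (s.filter fun x => g x ≠ b).card + 1 := by
  have hle : (s.filter fun x => g x = b).card ≤ 1 :=
    Finset.card_le_one.2 fun x hx y hy => by
      simp only [Finset.mem_filter] at hx hy
      exact hg hx.1 hy.1 (hx.2.trans hy.2.symm)
  have := Finset.card_filter_add_card_filter_not (s := s) (fun x => g x = b)
  simp only [ne_eq]
  omega

structure InnerPop (n k m : ℕ) (Q : Finset (Individual n)) : Prop where
  isInner : ∀ x ∈ Q, IsInner n k x
  injOn_ones : Set.InjOn ones (Q : Set (Individual n))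
  le_card : m ≤ Q.card

lemma innerPop_of_paretoOptimal (hkn : 2 * k ≤ n) {P : Finset (Individual n)}
    (hvalid : validPop (ojzj n k) P) (hpar : ∀ x ∈ P, ojzj n k x ∈ paretoFront (ojzj n k))
    (h0 : (fun _ => false : Individual n) ∉ P) (h1 : (fun _ => true : Individual n) ∉ P) :
    InnerPop n k P.card P := by
  have hinner : ∀ x ∈ P, IsInner n k x := fun x hx =>
    isInner_of_mem_paretoFront hkn (hpar x hx) (ne_of_mem_of_not_mem hx h0)
      (ne_of_mem_of_not_mem hx h1)
  refine ⟨hinner, fun x hx y hy hxy => ?_, le_rfl⟩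
  by_contra hne
  exact hvalid x hx y hy hne ((ojzj_weaklyDom_iff (hinner x hx) (hinner y hy)).2 hxy)

lemma InnerPop.updatePop {m : ℕ} {Q : Finset (Individual n)} (hQ : InnerPop n k m Q)
    (hkn : 2 * k ≤ n) (hm : 0 < m) {y : Individual n}
    (h0 : y ≠ fun _ => false) (h1 : y ≠ fun _ => true) :
    InnerPop n k m (updatePop (ojzj n k) Q y) := by
  by_cases hy : IsInner n k y
  · have hfilter : (Q.filter fun z => ¬ weaklyDom (ojzj n k y) (ojzj n k z)) =
        Q.filter fun z => ones z ≠ ones y := Finset.filter_congr fun z hz => by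
      rw [ojzj_weaklyDom_iff hy (hQ.isInner z hz), eq_comm]
    have hnotMem : y ∉ Q.filter fun z => ones z ≠ ones y := by simp
    rw [updatePop_eq_insert fun z hz => ojzj_not_strictlyDom (hQ.isInner z hz) hy, hfilter]
    refine ⟨?_, ?_, ?_⟩
    · simp only [Finset.mem_insert, Finset.mem_filter]
      rintro x (rfl | ⟨hx, -⟩)
      exacts [hy, hQ.isInner x hx]
    · rw [Finset.coe_insert, Set.injOn_insert (by exact_mod_cast hnotMem)]
      refine ⟨hQ.injOn_ones.mono fun x hx => (Finset.mem_filter.1 hx).1, ?_⟩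
      rintro ⟨z, hz, hzy⟩
      exact (Finset.mem_filter.1 hz).2 hzy
    · rw [Finset.card_insert_of_notMem hnotMem]
      exact hQ.le_card.trans (card_le_card_filter_ne_add_one_of_injOn hQ.injOn_ones _)
  · rw [updatePop_eq_self (Finset.card_pos.1 (hm.trans_le hQ.le_card))
      fun z hz => ojzj_strictlyDom_of_not_isInner hkn (hQ.isInner z hz) hy h0 h1]
    exact hQ

set_option linter.deprecated false in
lemma bernoulliVec_apply (p : ℝ≥0∞) (hp : p ≤ 1) (m : ℕ) (v : Fin m → Bool) :
    bernoulliVec p hp m v = ∏ i, if v i then p else 1 - p := by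
  induction m with
  | zero => simp [bernoulliVec, PMF.pure_apply, funext_iff]
  | succ m ih =>
    have hcons : ∀ b : Bool, ((bernoulliVec p hp m).map fun w => Fin.cons b w) v =
        if v 0 = b then bernoulliVec p hp m (Fin.tail v) else 0 := by
      intro b
      rw [PMF.map_apply]
      split_ifs with hb
      · rw [tsum_eq_single (Fin.tail v)]
        · rw [if_pos (by rw [← hb, Fin.cons_self_tail])]
        · exact fun w hw => if_neg fun hv => hw (by rw [hv, Fin.tail_cons])
      · exact ENNReal.tsum_eq_zero.2 fun w => if_neg fun hv => hb (by rw [hv, Fin.cons_zero])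
    have hprod : (∏ i : Fin (m + 1), if v i then p else 1 - p) =
        (if v 0 then p else 1 - p) * ∏ i : Fin m, if Fin.tail v i then p else 1 - p := by
      rw [Fin.prod_univ_succ]
      rfl
    have hp' : (p.toNNReal : ℝ≥0∞) = p :=
      ENNReal.coe_toNNReal (ne_top_of_le_ne_top ENNReal.one_ne_top hp)
    rw [bernoulliVec, PMF.bind_apply, tsum_fintype, Fintype.sum_bool, hcons, hcons, hprod,
      ← ih]
    erw [PMF.bernoulli_apply, PMF.bernoulli_apply]
    cases v 0 <;> simp [ENNReal.coe_sub, hp']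

lemma stdBitMut_apply (hn : n ≠ 0) (x y : Individual n) :
    stdBitMut x y = ∏ i, if x i ≠ y i then (n : ℝ≥0∞)⁻¹ else 1 - (n : ℝ≥0∞)⁻¹ := by
  rw [stdBitMut, dif_neg hn, PMF.map_apply, tsum_eq_single (fun i => x i != y i), if_pos,
    bernoulliVec_apply]
  · simp
  · funext i; cases hx : x i <;> cases hy : y i <;> simp [hx, hy]
  · intro mask hmask
    refine if_neg fun hy => hmask (funext fun i => ?_)
    rw [hy]
    cases hm : mask i <;> cases hx : x i <;> simp [hm, hx]

lemma stdBitMut_apply_le (x y : Individual n) :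
    stdBitMut x y ≤ (n : ℝ≥0∞)⁻¹ ^ hammingDist x y := by
  rcases eq_or_ne n 0 with rfl | hn
  · rw [Subsingleton.elim x y, hammingDist_self, pow_zero]
    exact PMF.coe_le_one _ _
  rw [stdBitMut_apply hn]
  calc (∏ i, if x i ≠ y i then (n : ℝ≥0∞)⁻¹ else 1 - (n : ℝ≥0∞)⁻¹)
      ≤ ∏ i, if x i ≠ y i then (n : ℝ≥0∞)⁻¹ else 1 :=
        Finset.prod_le_prod' fun i _ => by split_ifs <;> simp
    _ = (n : ℝ≥0∞)⁻¹ ^ hammingDist x y := by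
        rw [Finset.prod_ite, Finset.prod_const_one, mul_one, Finset.prod_const, hammingDist]

lemma sum_pow_le_of_injOn {ι : Type*} {s : Finset ι} {g : ι → ℕ} {k : ℕ}
    (hg : Set.InjOn g s) (hk : ∀ x ∈ s, k ≤ g x) (r : ℝ≥0∞) :
    ∑ x ∈ s, r ^ g x ≤ r ^ k * (1 - r)⁻¹ := by
  have hinj : Set.InjOn (fun x => g x - k) s := fun x hx y hy hxy =>
    hg hx hy (by have := hk x hx; have := hk y hy; simp only at hxy; omega)
  calc ∑ x ∈ s, r ^ g x = r ^ k * ∑ j ∈ s.image (fun x => g x - k), r ^ j := by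
        rw [Finset.sum_image hinj, Finset.mul_sum]
        refine Finset.sum_congr rfl fun x hx => ?_
        rw [← pow_add, Nat.add_sub_cancel' (hk x hx)]
    _ ≤ r ^ k * ∑' j, r ^ j := by gcongr; exact ENNReal.sum_le_tsum _
    _ = r ^ k * (1 - r)⁻¹ := by rw [ENNReal.tsum_geometric]

lemma inv_one_sub_inv_le_two (hn : 2 ≤ n) : (1 - (n : ℝ≥0∞)⁻¹)⁻¹ ≤ 2 := by
  have h : (1 : ℝ≥0∞) - 2⁻¹ = 2⁻¹ := ENNReal.one_sub_inv_two
  rw [← inv_inv (2 : ℝ≥0∞), ENNReal.inv_le_inv, ← h]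
  gcongr
  exact_mod_cast hn

lemma prob_semoStep {f : Individual n → ℝ × ℝ} {mutOp : Individual n → PMF (Individual n)}
    {Q : Finset (Individual n)} (hQ : Q.Nonempty) (E : Set (Finset (Individual n))) :
    prob (semoStep f mutOp Q) E =
      (Q.card : ℝ≥0∞)⁻¹ * ∑ x ∈ Q, prob (mutOp x) (updatePop f Q ⁻¹' E) := by
  rw [prob, semoStep, dif_pos hQ, PMF.toOuterMeasure_bind_apply,
    tsum_eq_sum (s := Q) fun x hx => by simp [hx], Finset.mul_sum]
  refine Finset.sum_congr rfl fun x hx => ?_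
  rw [PMF.uniformOfFinset_apply_of_mem hQ hx, PMF.toOuterMeasure_map_apply, prob]

lemma prob_semoStep_not_innerPop_le (hkn : 2 * k ≤ n) (hn : 2 ≤ n) {m : ℕ} (hm : 0 < m)
    {Q : Finset (Individual n)} (hQ : InnerPop n k m Q) :
    prob (semoStep (ojzj n k) stdBitMut Q) {Q' | ¬ InnerPop n k m Q'} ≤
      4 * (m : ℝ≥0∞)⁻¹ * (n : ℝ≥0∞)⁻¹ ^ k := by
  set r := (n : ℝ≥0∞)⁻¹
  have hbad : ∀ x ∈ Q,
      prob (stdBitMut x) (updatePop (ojzj n k) Q ⁻¹' {Q' | ¬ InnerPop n k m Q'}) ≤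
        r ^ ones x + r ^ zeros x := fun x _ => calc
    _ ≤ prob (stdBitMut x) ({fun _ => false} ∪ {fun _ => true}) :=
        MeasureTheory.measure_mono fun y hy => by
          by_contra hy'
          simp only [Set.mem_union, Set.mem_singleton_iff, not_or] at hy'
          exact hy (hQ.updatePop hkn hm hy'.1 hy'.2)
    _ ≤ stdBitMut x (fun _ => false) + stdBitMut x (fun _ => true) := by
        rw [prob, ← PMF.toOuterMeasure_apply_singleton, ← PMF.toOuterMeasure_apply_singleton]
        exact MeasureTheory.measure_union_le _ _
    _ ≤ r ^ ones x + r ^ zeros x := by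
        rw [← hammingDist_allFalse, ← hammingDist_allTrue]
        exact add_le_add (stdBitMut_apply_le _ _) (stdBitMut_apply_le _ _)
  have hzeros : Set.InjOn zeros (Q : Set (Individual n)) := fun x hx y hy hxy =>
    hQ.injOn_ones hx hy (by have := ones_add_zeros x; have := ones_add_zeros y; omega)
  have hgeom : r ^ k * (1 - r)⁻¹ ≤ r ^ k * 2 := by gcongr; exact inv_one_sub_inv_le_two hn
  rw [prob_semoStep (Finset.card_pos.1 (hm.trans_le hQ.le_card))]
  calc (Q.card : ℝ≥0∞)⁻¹ * ∑ x ∈ Q, prob (stdBitMut x) _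
      ≤ (m : ℝ≥0∞)⁻¹ * (r ^ k * 2 + r ^ k * 2) := by
        gcongr ?_ * ?_
        · exact ENNReal.inv_le_inv.2 (by exact_mod_cast hQ.le_card)
        · refine (Finset.sum_le_sum hbad).trans ?_
          rw [Finset.sum_add_distrib]
          gcongr
          · exact (sum_pow_le_of_injOn hQ.injOn_ones (fun x hx => (hQ.isInner x hx).1) r).trans
              hgeom
          · refine (sum_pow_le_of_injOn hzeros (fun x hx => ?_) r).trans hgeom
            have := ones_add_zeros x
            have := (hQ.isInner x hx).2
            omega
    _ = 4 * (m : ℝ≥0∞)⁻¹ * r ^ k := by ring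

lemma prob_add_prob_compl {α : Type*} (p : PMF α) (E : Set α) : prob p E + prob p Eᶜ = 1 := by
  rw [prob, prob, PMF.toOuterMeasure_apply, PMF.toOuterMeasure_apply, ← ENNReal.tsum_add,
    ← p.tsum_coe]
  exact tsum_congr fun x => Set.indicator_self_add_compl_apply E p x

lemma prob_le_one {α : Type*} (p : PMF α) (E : Set α) : prob p E ≤ 1 :=
  (prob_add_prob_compl p E).le.trans' le_self_add

section MarkovChain

variable {σ : Type*} [Inhabited σ] {step : σ → PMF σ} {s : σ}

lemma ne_nil_of_mem_support_run {t : ℕ} {l : List σ} (hl : l ∈ (run step s t).support) :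
    l ≠ [] := by
  cases t with
  | zero => simp_all [run]
  | succ t =>
    obtain ⟨l', -, hl⟩ := (PMF.mem_support_bind_iff _ _ _).1 hl
    obtain ⟨s', -, rfl⟩ := (PMF.mem_support_map_iff _ _ _).1 hl
    exact List.cons_ne_nil _ _

lemma prob_run_exists_not_le {I : σ → Prop} {p : ℝ≥0∞} (hs : I s)
    (hstep : ∀ q, I q → prob (step q) {q' | ¬ I q'} ≤ p) (t : ℕ) :
    prob (run step s t) {l | ∃ q ∈ l, ¬ I q} ≤ t * p := by
  set B : Set (List σ) := {l | ∃ q ∈ l, ¬ I q}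
  induction t with
  | zero => simp [prob, run, B, hs]
  | succ t ih =>
    have hterm : ∀ l, run step s t l * prob (step l.headI) ((· :: l) ⁻¹' B) ≤
        B.indicator (run step s t) l + run step s t l * p := by
      intro l
      by_cases hl : l ∈ B
      · rw [Set.indicator_of_mem hl]
        exact le_add_right (mul_le_of_le_one_right' (prob_le_one _ _))
      rcases eq_or_ne (run step s t l) 0 with h0 | h0
      · simp [h0]
      obtain ⟨a, l', rfl⟩ := List.exists_cons_of_ne_nil (ne_nil_of_mem_support_run h0)
      have hl : ∀ q ∈ a :: l', I q := by simpa [B] using hl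
      have hpre : (· :: a :: l') ⁻¹' B = {q' | ¬ I q'} := by
        ext q'
        refine ⟨fun ⟨q, hq, hnq⟩ => ?_, fun h => ⟨q', List.mem_cons_self, h⟩⟩
        rcases List.mem_cons.1 hq with rfl | hq
        exacts [hnq, absurd (hl q hq) hnq]
      rw [hpre]
      exact le_add_left (mul_le_mul_right (hstep a (hl a List.mem_cons_self)) _)
    calc prob (run step s (t + 1)) B
        = ∑' l, run step s t l * prob (step l.headI) ((· :: l) ⁻¹' B) := by
          rw [prob, run, PMF.toOuterMeasure_bind_apply]
          simp only [PMF.toOuterMeasure_map_apply, prob]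
      _ ≤ ∑' l, (B.indicator (run step s t) l + run step s t l * p) := ENNReal.tsum_le_tsum hterm
      _ = prob (run step s t) B + p := by
          rw [ENNReal.tsum_add, ENNReal.tsum_mul_right, PMF.tsum_coe, one_mul, prob,
            PMF.toOuterMeasure_apply]
      _ ≤ (t + 1 : ℕ) * p := by push_cast; rw [add_mul, one_mul]; gcongr

lemma one_sub_mul_le_prob_run_forall {I : σ → Prop} {p : ℝ≥0∞} (hs : I s)
    (hstep : ∀ q, I q → prob (step q) {q' | ¬ I q'} ≤ p) (t : ℕ) :
    1 - t * p ≤ prob (run step s t) {l | ∀ q ∈ l, I q} := by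
  have hcompl : {l : List σ | ∀ q ∈ l, I q}ᶜ = {l | ∃ q ∈ l, ¬ I q} := by
    ext l; simp
  rw [← prob_add_prob_compl (run step s t) {l | ∀ q ∈ l, I q}, hcompl]
  exact tsub_le_iff_right.2 (add_le_add le_rfl (prob_run_exists_not_le hs hstep t))

end MarkovChain

lemma mul_inv_two_le_tsum {f : ℕ → ℝ≥0∞} {p : ℝ≥0∞} {T : ℕ} (hf : ∀ t, 1 - t * p ≤ f t)
    (hT : 2 * T * p ≤ 1) : T * 2⁻¹ ≤ ∑' t, f t := by
  have hTp : T * p ≤ 2⁻¹ := ENNReal.le_inv_iff_mul_le.2 (by rw [mul_comm, ← mul_assoc]; exact hT)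
  calc (T : ℝ≥0∞) * 2⁻¹ = ∑ _t ∈ Finset.range T, (2 : ℝ≥0∞)⁻¹ := by simp
    _ ≤ ∑ t ∈ Finset.range T, f t := Finset.sum_le_sum fun t ht => by
        refine le_trans ?_ (hf t)
        rw [← ENNReal.one_sub_inv_two]
        gcongr
        exact le_trans (by gcongr; exact (Finset.mem_range.1 ht).le) hTp
    _ ≤ ∑' t, f t := ENNReal.sum_le_tsum _

lemma two_mul_div_eight_mul_pow_mul_le_one (m n k : ℕ) :
    2 * ((m / 8 * n ^ k : ℕ) : ℝ≥0∞) * (4 * (m : ℝ≥0∞)⁻¹ * (n : ℝ≥0∞)⁻¹ ^ k) ≤ 1 :=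
  calc 2 * ((m / 8 * n ^ k : ℕ) : ℝ≥0∞) * (4 * (m : ℝ≥0∞)⁻¹ * (n : ℝ≥0∞)⁻¹ ^ k)
      = ((8 * (m / 8) : ℕ) : ℝ≥0∞) * (m : ℝ≥0∞)⁻¹ * ((n : ℝ≥0∞) * (n : ℝ≥0∞)⁻¹) ^ k := by
        push_cast; ring
    _ ≤ (m : ℝ≥0∞) * (m : ℝ≥0∞)⁻¹ * 1 ^ k := by
        gcongr
        · exact_mod_cast Nat.mul_div_le m 8
        · exact ENNReal.mul_inv_le_one _
    _ ≤ 1 := by simp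

lemma ofReal_mul_pow_succ_le_div_eight_mul_pow {α : ℝ} {m n : ℕ} (k : ℕ) (hαn : 16 ≤ α * n)
    (hm : α * n ≤ m) :
    ENNReal.ofReal (α / 32 * (n : ℝ) ^ (k + 1)) ≤ ((m / 8 * n ^ k : ℕ) : ℝ≥0∞) * 2⁻¹ := by
  have hq : (m : ℝ) < 8 * (m / 8 : ℕ) + 8 := by exact_mod_cast (by omega : m < 8 * (m / 8) + 8)
  have hdiv : α * n / 16 ≤ (m / 8 : ℕ) := by linarith
  calc ENNReal.ofReal (α / 32 * (n : ℝ) ^ (k + 1))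
      ≤ ENNReal.ofReal (((m / 8 * n ^ k : ℕ) : ℝ) / 2) := by
        refine ENNReal.ofReal_le_ofReal ?_
        push_cast
        calc α / 32 * (n : ℝ) ^ (k + 1) = α * n / 16 * n ^ k / 2 := by ring
          _ ≤ _ := by gcongr
    _ = ((m / 8 * n ^ k : ℕ) : ℝ≥0∞) * 2⁻¹ := by
        rw [ENNReal.ofReal_div_of_pos two_pos, ENNReal.ofReal_natCast, div_eq_mul_inv,
          ENNReal.ofReal_ofNat]

/-- For every constant `α > 0` there exists `c > 0` such that for all
sufficiently large `n` and all integers `1 < k ≤ n/4`, the GSEMO maximizing `OJZJ_k`,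
started from any population state consisting entirely of Pareto-optimal individuals, of size
at least `α·n`, containing neither `0ⁿ` nor `1ⁿ`, needs in expectation (one evaluation per
iteration, computed via the tail-sum formula) at least `c·n^{k+1}` objective-function
evaluations before the population covers the Pareto front. -/
theorem gsemo_ojzj_idealized_lower_bound (α : ℝ) (hα : 0 < α) :
    ∃ c : ℝ, 0 < c ∧ ∃ N₀ : ℕ, ∀ n : ℕ, N₀ ≤ n → ∀ k : ℕ, 1 < k → 4 * k ≤ n →
      ∀ P : Finset (Individual n), validPop (ojzj n k) P →
        (∀ x ∈ P, ojzj n k x ∈ paretoFront (ojzj n k)) →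
        α * n ≤ (P.card : ℝ) →
        (fun _ => false : Individual n) ∉ P →
        (fun _ => true : Individual n) ∉ P →
        ENNReal.ofReal (c * (n : ℝ) ^ (k + 1)) ≤
          ∑' t : ℕ,
            prob (run (semoStep (ojzj n k) stdBitMut) P t)
              {l | ∀ Q ∈ l, ¬ covers (ojzj n k) Q} := by
  refine ⟨α / 32, by positivity, ⌈16 / α⌉₊, fun n hn k hk hkn P hvalid hpar hcard h0 h1 => ?_⟩
  have hαn : 16 ≤ α * n := by
    rw [← div_le_iff₀' hα]
    exact (Nat.le_ceil _).trans (by exact_mod_cast hn)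
  have hm : 0 < P.card := by exact_mod_cast (by linarith : (0 : ℝ) < P.card)
  have hrun (t : ℕ) : 1 - t * (4 * (P.card : ℝ≥0∞)⁻¹ * (n : ℝ≥0∞)⁻¹ ^ k) ≤
      prob (run (semoStep (ojzj n k) stdBitMut) P t) {l | ∀ Q ∈ l, ¬ covers (ojzj n k) Q} :=
    (one_sub_mul_le_prob_run_forall (innerPop_of_paretoOptimal (by omega) hvalid hpar h0 h1)
      (fun Q hQ => prob_semoStep_not_innerPop_le (by omega) (by omega) hm hQ) t).trans
      (MeasureTheory.measure_mono fun l hl Q hQ =>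
        not_covers_of_forall_isInner (by omega) (hl Q hQ).isInner)
  exact (ofReal_mul_pow_succ_le_div_eight_mul_pow k hαn hcard).trans
    (mul_inv_two_le_tsum hrun (two_mul_div_eight_mul_pow_mul_le_one P.card n k))

end GSEMOPaper
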